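/- arXiv:2503.24207 — 2 statements merged into one kernel-verified Lean document; each statement's English description precedes it below -/
import Mathlib

section
/- Let {S_i : i ∈ I} be a block-splitting family of infinite subsets of ℕ, and for each i set Z_i := span{e_n : n ∈ S_i} and Z_i^c := E ∖ Z_i. Then for every almost disjoint family 𝒜 ⊆ E^[∞] and every B ∈ H^-(𝒜): (i) for every i ∈ I, ⟨B⟩ ∩ Z_i ∈ I^+(𝒜) or ⟨B⟩ ∩ Z_i^c ∈ I^+(𝒜); (ii) if ⟨B⟩ ∩ Z_i ∈ I^+(𝒜), then there exists C ∈ H^-(𝒜) with ⟨C⟩ ⊆ ⟨B⟩ ∩ Z_i; (iii) if ⟨B⟩ ∩ Z_i^c ∈ I^+(𝒜), then there exists C ∈ H^-(𝒜) with ⟨C⟩ ⊆ ⟨B⟩ ∩ Z_i^c; (iv) there exists i ∈ I such that both ⟨B⟩ ∩ Z_i ∈ I^+(𝒜) and ⟨B⟩ ∩ Z_i^c ∈ I^+(𝒜). -/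
noncomputable section

variable {𝔽 : Type} [Field 𝔽]

/-- The `ℵ₀`-dimensional vector space `E` over `𝔽`, realised as finitely supported
functions `ℕ →₀ 𝔽`; the fixed basis is `eVec 𝔽 n = Finsupp.single n 1`. -/
abbrev EVec (𝔽 : Type) [Field 𝔽] : Type := ℕ →₀ 𝔽

/-- The basis vector `e n`. -/
def eVec (𝔽 : Type) [Field 𝔽] (n : ℕ) : EVec 𝔽 := Finsupp.single n 1

/-- `x < y` iff `max (supp x) < min (supp y)`, i.e. every element of the support of `x`
is below every element of the support of `y`. -/
def BlockLt (x y : EVec 𝔽) : Prop := ∀ i ∈ x.support, ∀ j ∈ y.support, i < j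

/-- An infinite block sequence: a `<`-increasing sequence of nonzero vectors. -/
def IsBlockSeq (A : ℕ → EVec 𝔽) : Prop :=
  (∀ n, A n ≠ 0) ∧ ∀ m n : ℕ, m < n → BlockLt (A m) (A n)

/-- A finite block sequence (as a list). -/
def IsBlockList (a : List (EVec 𝔽)) : Prop :=
  (∀ x ∈ a, x ≠ 0) ∧ a.Pairwise BlockLt

/-- `⟨A⟩`, the span of (the range of) a block sequence. -/
def spanSeq (A : ℕ → EVec 𝔽) : Submodule 𝔽 (EVec 𝔽) := Submodule.span 𝔽 (Set.range A)

/-- `⟨a⟩`, the span of a finite block sequence. -/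
def spanList (a : List (EVec 𝔽)) : Submodule 𝔽 (EVec 𝔽) := Submodule.span 𝔽 {x | x ∈ a}

/-- `A/N = (x_n)_{n ≥ N}`. -/
def tailSeq (A : ℕ → EVec 𝔽) (N : ℕ) : ℕ → EVec 𝔽 := fun n => A (n + N)

/-- `r_n(A) = (x_0, …, x_{n-1})`. -/
def rApprox (A : ℕ → EVec 𝔽) (n : ℕ) : List (EVec 𝔽) := (List.range n).map A

/-- `A ≤ B` iff `⟨A⟩ ⊆ ⟨B⟩`. -/
def SeqLe (A B : ℕ → EVec 𝔽) : Prop := spanSeq A ≤ spanSeq B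

/-- `A ≤* B` iff `A/N ≤ B` for some `N`. -/
def SeqLeStar (A B : ℕ → EVec 𝔽) : Prop := ∃ N, SeqLe (tailSeq A N) B

/-- `d_A(a)`: the least `N` such that `max (supp a)` lies below (the support of) every
vector of `A/N` (this is `0` when `a` is empty). -/
def depthIn (A : ℕ → EVec 𝔽) (a : List (EVec 𝔽)) : ℕ :=
  sInf {N | ∀ x ∈ a, ∀ k, N ≤ k → BlockLt x (A k)}

/-- `⟨C⟩ ⊆ Y`, understood modulo zero. -/
def SpanSub (C : ℕ → EVec 𝔽) (Y : Set (EVec 𝔽)) : Prop :=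
  ∀ x ∈ spanSeq C, x ≠ 0 → x ∈ Y

/-- `Y` is big if `⟨C⟩ ⊆ Y` (mod zero) for some infinite block sequence `C`. -/
def BigSet (Y : Set (EVec 𝔽)) : Prop := ∃ C, IsBlockSeq C ∧ SpanSub C Y

/-- `Y` is small if it is not big. -/
def SmallSet (Y : Set (EVec 𝔽)) : Prop := ¬ BigSet Y

/-- `Y` is very small if `Y ∪ Z` is small for every small `Z`. -/
def VerySmallSet (Y : Set (EVec 𝔽)) : Prop :=
  ∀ Z : Set (EVec 𝔽), SmallSet Z → SmallSet (Y ∪ Z)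

/-- A semicoideal: a `≤*`-upward closed set of infinite block sequences. -/
def Semicoideal (H : Set (ℕ → EVec 𝔽)) : Prop :=
  (∀ A ∈ H, IsBlockSeq A) ∧
    ∀ A ∈ H, ∀ B : ℕ → EVec 𝔽, IsBlockSeq B → SeqLeStar A B → B ∈ H

/-- `H ↾ A = {B ∈ H : B ≤ A}`. -/
def restrictBelow (H : Set (ℕ → EVec 𝔽)) (A : ℕ → EVec 𝔽) : Set (ℕ → EVec 𝔽) :=
  {B ∈ H | SeqLe B A}

/-- `Y ⊆ E` is `H`-dense below `A`. -/
def HDense (H : Set (ℕ → EVec 𝔽)) (Y : Set (EVec 𝔽)) (A : ℕ → EVec 𝔽) : Prop :=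
  ∀ B ∈ restrictBelow H A, ∃ C, IsBlockSeq C ∧ SeqLe C B ∧ SpanSub C Y

/-- `H` is full. -/
def FullFam (H : Set (ℕ → EVec 𝔽)) : Prop :=
  ∀ Y : Set (EVec 𝔽), ∀ A ∈ H, HDense H Y A → ∃ B ∈ restrictBelow H A, SpanSub B Y

/-- `H` is a coideal. -/
def CoidealFam (H : Set (ℕ → EVec 𝔽)) : Prop :=
  ∀ Y : Set (EVec 𝔽), ∀ A ∈ H, ∃ B ∈ restrictBelow H A, SpanSub B Y ∨ SpanSub B Yᶜ

/-- `B` weakly diagonalises the `≤`-decreasing sequence `As`. -/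
def WeakDiag (As : ℕ → ℕ → EVec 𝔽) (B : ℕ → EVec 𝔽) : Prop :=
  SeqLe B (As 0) ∧ ∀ n, SeqLeStar B (As n)

/-- The (p)-property. -/
def PProp (H : Set (ℕ → EVec 𝔽)) : Prop :=
  ∀ As : ℕ → ℕ → EVec 𝔽, (∀ n, As n ∈ H) → (∀ n, SeqLe (As (n + 1)) (As n)) →
    ∃ B ∈ H, WeakDiag As B

/-- The (q)-property: `lo m`, `hi m` are the endpoints of the finite intervals `I m`. -/
def QProp (H : Set (ℕ → EVec 𝔽)) : Prop :=
  ∀ A ∈ H, ∀ lo hi : ℕ → ℕ, (∀ m, lo m ≤ hi m) → (∀ m, hi m < lo (m + 1)) →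
    ∃ B ∈ restrictBelow H A, ∀ n : ℕ, ∃ m : ℕ,
      spanList (rApprox B n) ≤ spanList (rApprox A (lo m - 1)) ∧
      SeqLe (tailSeq B n) (tailSeq A (hi m))

/-- `B` diagonalises the `≤`-decreasing sequence `As` within `A`. -/
def DiagWithin (A : ℕ → EVec 𝔽) (As : ℕ → ℕ → EVec 𝔽) (B : ℕ → EVec 𝔽) : Prop :=
  SeqLe B A ∧ ∀ n, SeqLe (tailSeq B n) (As (depthIn A (rApprox B n)))

/-- `H` is selective. -/
def SelectiveFam (H : Set (ℕ → EVec 𝔽)) : Prop :=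
  ∀ A ∈ H, ∀ As : ℕ → ℕ → EVec 𝔽, (∀ n, As n ∈ H) →
    (∀ n, SeqLe (As (n + 1)) (As n)) → SeqLe (As 0) A →
    ∃ B ∈ H, DiagWithin A As B

/-- Two subspaces are almost disjoint if their intersection is finite dimensional. -/
def AlmostDisjoint (V W : Submodule 𝔽 (EVec 𝔽)) : Prop :=
  FiniteDimensional 𝔽 ↥(V ⊓ W)

/-- An almost disjoint family of block sequences. -/
def ADFamily (𝒜 : Set (ℕ → EVec 𝔽)) : Prop :=
  (∀ A ∈ 𝒜, IsBlockSeq A) ∧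
    ∀ A ∈ 𝒜, ∀ B ∈ 𝒜, A ≠ B → AlmostDisjoint (spanSeq A) (spanSeq B)

/-- A maximal almost disjoint (mad) family of block sequences. -/
def MadFamily (𝒜 : Set (ℕ → EVec 𝔽)) : Prop :=
  ADFamily 𝒜 ∧
    ∀ C : ℕ → EVec 𝔽, IsBlockSeq C →
      ∃ A ∈ 𝒜, ¬ AlmostDisjoint (spanSeq C) (spanSeq A)

/-- `Y ∈ I(𝒜)`: some finite union of spans of members of `𝒜` almost covers `Y`. -/
def MemI (𝒜 : Set (ℕ → EVec 𝔽)) (Y : Set (EVec 𝔽)) : Prop :=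
  ∃ F : Finset (ℕ → EVec 𝔽), ↑F ⊆ 𝒜 ∧
    SmallSet (Y \ ⋃ A ∈ F, (spanSeq A : Set (EVec 𝔽)))

/-- `Y ∈ I⁺(𝒜)`. -/
def MemIplus (𝒜 : Set (ℕ → EVec 𝔽)) (Y : Set (EVec 𝔽)) : Prop := ¬ MemI 𝒜 Y

/-- `Y ∈ I⁺⁺(𝒜)`: infinitely many `A ∈ 𝒜` with `Y ∩ ⟨A⟩` big. -/
def MemIpp (𝒜 : Set (ℕ → EVec 𝔽)) (Y : Set (EVec 𝔽)) : Prop :=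
  {A ∈ 𝒜 | BigSet (Y ∩ (spanSeq A : Set (EVec 𝔽)))}.Infinite

/-- `H⁻(𝒜)`. -/
def HMinus (𝒜 : Set (ℕ → EVec 𝔽)) : Set (ℕ → EVec 𝔽) :=
  {B | IsBlockSeq B ∧ MemIplus 𝒜 (spanSeq B : Set (EVec 𝔽))}

/-- `H(𝒜)`. -/
def HFam (𝒜 : Set (ℕ → EVec 𝔽)) : Set (ℕ → EVec 𝔽) :=
  {B | IsBlockSeq B ∧ MemIpp 𝒜 (spanSeq B : Set (EVec 𝔽))}

/-- `S` splits the interval partition whose intervals are `[b n, b (n+1))`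
(where `b 0 = 0` and `b` is strictly monotone). -/
def SplitsPartition (S : Set ℕ) (b : ℕ → ℕ) : Prop :=
  {n | ∀ k, b n ≤ k → k < b (n + 1) → k ∈ S}.Infinite ∧
  {n | ∀ k, b n ≤ k → k < b (n + 1) → k ∉ S}.Infinite

/-- `Z_S = span{e_n : n ∈ S}`. -/
def ZSub (𝔽 : Type) [Field 𝔽] (S : Set ℕ) : Submodule 𝔽 (EVec 𝔽) :=
  Submodule.span 𝔽 ((fun n => eVec 𝔽 n) '' S)

/-- The Ellentuck set `[a, A]`. -/
def EllSet (a : List (EVec 𝔽)) (A : ℕ → EVec 𝔽) : Set (ℕ → EVec 𝔽) :=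
  {B | IsBlockSeq B ∧ SeqLe B A ∧ rApprox B a.length = a}

/-- `𝒜ℛ ↾ A`: finite block sequences whose span lies in `⟨A⟩`. -/
def ARbelow (A : ℕ → EVec 𝔽) : Set (List (EVec 𝔽)) :=
  {a | IsBlockList a ∧ spanList a ≤ spanSeq A}

/-- `𝒜ℛ ↾ [a, A]`: members of `𝒜ℛ ↾ A` extending `a`. -/
def ARbelowIn (a : List (EVec 𝔽)) (A : ℕ → EVec 𝔽) : Set (List (EVec 𝔽)) :=
  {b ∈ ARbelow A | a <+: b}

/-- `{D b}` is a dense open family below `[a, A]` in `H`. -/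
def DenseOpenBelow (H : Set (ℕ → EVec 𝔽)) (a : List (EVec 𝔽)) (A : ℕ → EVec 𝔽)
    (D : List (EVec 𝔽) → Set (ℕ → EVec 𝔽)) : Prop :=
  ∀ b ∈ ARbelowIn a A,
    D b ⊆ H ∩ EllSet b A ∧
    (∀ B ∈ D b, ∀ C ∈ H ∩ EllSet b B, C ∈ D b) ∧
    (∀ B ∈ H ∩ EllSet b A, ∃ C ∈ H ∩ EllSet b B, C ∈ D b)

/-- `B` diagonalises the dense open family `{D b}` below `[a, A]` in `H`. -/
def DiagFamily (H : Set (ℕ → EVec 𝔽)) (a : List (EVec 𝔽)) (A : ℕ → EVec 𝔽)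
    (D : List (EVec 𝔽) → Set (ℕ → EVec 𝔽)) (B : ℕ → EVec 𝔽) : Prop :=
  B ∈ H ∩ EllSet a A ∧
    ∀ b ∈ ARbelowIn a A, ∃ Ab ∈ D b, EllSet b B ⊆ EllSet b Ab

/-- `H` is semiselective. -/
def Semiselective (H : Set (ℕ → EVec 𝔽)) : Prop :=
  ∀ A ∈ H, ∀ a ∈ ARbelow A, ∀ D : List (EVec 𝔽) → Set (ℕ → EVec 𝔽),
    DenseOpenBelow H a A D → ∃ B, DiagFamily H a A D B

/-- `D` is a dense open subset of `(H, ≤)`. -/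
def DenseOpenIn (H D : Set (ℕ → EVec 𝔽)) : Prop :=
  D ⊆ H ∧ (∀ A ∈ D, ∀ B ∈ H, SeqLe B A → B ∈ D) ∧ ∀ A ∈ H, ∃ B ∈ D, SeqLe B A
namespace S15

open Finsupp Submodule

variable {𝔽 : Type} [Field 𝔽]

noncomputable def supSupp (x : EVec 𝔽) : ℕ := x.support.sup id

lemma le_supSupp {x : EVec 𝔽} {j : ℕ} (h : j ∈ x.support) : j ≤ supSupp x :=
  Finset.le_sup (f := id) h

lemma supp_nonempty {x : EVec 𝔽} (h : x ≠ 0) : x.support.Nonempty :=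
  Finsupp.support_nonempty_iff.2 h

lemma ZSub_eq (S : Set ℕ) : ZSub 𝔽 S = Finsupp.supported 𝔽 𝔽 S := by
  rw [Finsupp.supported_eq_span_single]; rfl

lemma mem_ZSub {S : Set ℕ} {x : EVec 𝔽} : x ∈ ZSub 𝔽 S ↔ (x.support : Set ℕ) ⊆ S := by
  rw [ZSub_eq]; exact Finsupp.mem_supported 𝔽 x

lemma span_supp_subset {T : Set (EVec 𝔽)} {U : Set ℕ}
    (h : ∀ y ∈ T, (y.support : Set ℕ) ⊆ U) :
    ∀ x ∈ Submodule.span 𝔽 T, (x.support : Set ℕ) ⊆ U := by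
  intro x hx
  have hle : Submodule.span 𝔽 T ≤ Finsupp.supported 𝔽 𝔽 U :=
    Submodule.span_le.2 fun y hy => (Finsupp.mem_supported 𝔽 y).2 (h y hy)
  exact (Finsupp.mem_supported 𝔽 x).1 (hle hx)

lemma isBlockSeq_tail {C : ℕ → EVec 𝔽} (h : IsBlockSeq C) (k : ℕ) :
    IsBlockSeq (tailSeq C k) :=
  ⟨fun n => h.1 _, fun m n hmn => h.2 _ _ (by omega)⟩

lemma spanSeq_le_of_mem {C : ℕ → EVec 𝔽} {W : Submodule 𝔽 (EVec 𝔽)}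
    (h : ∀ n, C n ∈ W) : spanSeq C ≤ W :=
  Submodule.span_le.2 (by rintro x ⟨n, rfl⟩; exact h n)

lemma spanSeq_tail_le (C : ℕ → EVec 𝔽) (k : ℕ) : spanSeq (tailSeq C k) ≤ spanSeq C :=
  spanSeq_le_of_mem fun n => Submodule.subset_span ⟨n + k, rfl⟩

lemma spanSeq_comp_le (C : ℕ → EVec 𝔽) (σ : ℕ → ℕ) :
    spanSeq (fun m => C (σ m)) ≤ spanSeq C :=
  spanSeq_le_of_mem fun n => Submodule.subset_span ⟨σ n, rfl⟩

lemma isBlockSeq_comp {C : ℕ → EVec 𝔽} (h : IsBlockSeq C) {σ : ℕ → ℕ} (hσ : StrictMono σ) :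
    IsBlockSeq (fun m => C (σ m)) :=
  ⟨fun n => h.1 _, fun m n hmn => h.2 _ _ (hσ hmn)⟩

lemma supSupp_lt {C : ℕ → EVec 𝔽} (h : IsBlockSeq C) {m n : ℕ} (hmn : m < n) :
    ∀ j ∈ (C n).support, supSupp (C m) < j := by
  intro j hj
  obtain ⟨i, hi⟩ := supp_nonempty (h.1 m)
  have hij : ∀ i' ∈ (C m).support, i' < j := fun i' hi' => h.2 m n hmn i' hi' j hj
  have h0 : (0:ℕ) < j := lt_of_le_of_lt (Nat.zero_le i) (hij i hi)
  exact (Finset.sup_lt_iff h0).2 hij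

lemma self_le_supSupp {C : ℕ → EVec 𝔽} (h : IsBlockSeq C) : ∀ n, n ≤ supSupp (C n) := by
  intro n
  induction n with
  | zero => exact Nat.zero_le _
  | succ n ih =>
    obtain ⟨j, hj⟩ := supp_nonempty (h.1 (n+1))
    have h1 := supSupp_lt h (Nat.lt_succ_self n) j hj
    have h2 := le_supSupp hj
    omega

lemma supSupp_strict {C : ℕ → EVec 𝔽} (h : IsBlockSeq C) {m n : ℕ} (hmn : m < n) :
    supSupp (C m) < supSupp (C n) := by
  obtain ⟨j, hj⟩ := supp_nonempty (h.1 n)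
  exact lt_of_lt_of_le (supSupp_lt h hmn j hj) (le_supSupp hj)

lemma supSupp_mono {C : ℕ → EVec 𝔽} (h : IsBlockSeq C) {m n : ℕ} (hmn : m ≤ n) :
    supSupp (C m) ≤ supSupp (C n) := by
  rcases Nat.eq_or_lt_of_le hmn with rfl | hlt
  · exact le_rfl
  · exact le_of_lt (supSupp_strict h hlt)

lemma tail_supp_ge {C : ℕ → EVec 𝔽} (h : IsBlockSeq C) (k : ℕ) :
    ∀ x ∈ spanSeq (tailSeq C k), ∀ j ∈ x.support, k ≤ j := by
  intro x hx j hj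
  have key : ∀ y ∈ Set.range (tailSeq C k), (y.support : Set ℕ) ⊆ {j : ℕ | k ≤ j} := by
    rintro y ⟨m, rfl⟩ j' hj'
    rcases Nat.eq_zero_or_pos k with rfl | hk
    · exact Nat.zero_le _
    · have h1 : k - 1 < m + k := by omega
      have h2 := supSupp_lt h h1 j' hj'
      have h3 := self_le_supSupp h (k-1)
      simp only [Set.mem_setOf_eq]
      omega
  exact span_supp_subset key x hx hj

lemma findim_supp_bound (V : Submodule 𝔽 (EVec 𝔽)) (hV : FiniteDimensional 𝔽 V) :
    ∃ N : ℕ, ∀ x ∈ V, ∀ j ∈ x.support, j < N := by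
  obtain ⟨s, hs⟩ := (Submodule.fg_iff_finiteDimensional V).2 hV
  refine ⟨(s.sup supSupp) + 1, ?_⟩
  intro x hx j hj
  have hb := span_supp_subset (T := (↑s : Set (EVec 𝔽))) (U := {j : ℕ | j ≤ s.sup supSupp})
    (fun y hy j' hj' => le_trans (le_supSupp hj') (Finset.le_sup (Finset.mem_coe.1 hy))) x
    (by rw [hs]; exact hx)
  have := hb hj
  simp only [Set.mem_setOf_eq] at this
  omega

lemma tail_avoid {C : ℕ → EVec 𝔽} (h : IsBlockSeq C) (F : Finset (ℕ → EVec 𝔽))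
    (hF : ∀ A ∈ F, FiniteDimensional 𝔽 ↥(spanSeq C ⊓ spanSeq A)) :
    ∃ k, ∀ x ∈ spanSeq (tailSeq C k), x ≠ 0 → ∀ A ∈ F, x ∉ spanSeq A := by
  have hex : ∀ A : {A // A ∈ F}, ∃ N : ℕ, ∀ x ∈ spanSeq C ⊓ spanSeq A.1, ∀ j ∈ x.support, j < N :=
    fun A => findim_supp_bound _ (hF A.1 A.2)
  choose N hN using hex
  refine ⟨F.attach.sup N, ?_⟩
  intro x hx hx0 A hA hxA
  have hxC : x ∈ spanSeq C := spanSeq_tail_le C _ hx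
  obtain ⟨j, hj⟩ := supp_nonempty hx0
  have h1 := hN ⟨A, hA⟩ x ⟨hxC, hxA⟩ j hj
  have h2 := tail_supp_ge h _ x hx j hj
  have h3 : N ⟨A, hA⟩ ≤ F.attach.sup N := Finset.le_sup (Finset.mem_attach _ _)
  omega

lemma exists_high_of_infdim {W : Submodule 𝔽 (EVec 𝔽)} (hW : ¬ FiniteDimensional 𝔽 W) (M : ℕ) :
    ∃ x, x ∈ W ∧ x ≠ 0 ∧ ∀ j ∈ x.support, M ≤ j := by
  by_contra hc
  push_neg at hc
  apply hW
  let f : W →ₗ[𝔽] (Fin M → 𝔽) := LinearMap.pi fun i => (Finsupp.lapply i.1).comp W.subtype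
  have hker : LinearMap.ker f = ⊥ := by
    rw [LinearMap.ker_eq_bot']
    intro x hx
    by_contra hx0
    have hx0' : (x : EVec 𝔽) ≠ 0 := fun h0 => hx0 (Subtype.ext h0)
    obtain ⟨j, hjs, hjM⟩ := hc x x.2 hx0'
    have hxj : (x : EVec 𝔽) j ≠ 0 := Finsupp.mem_support_iff.1 hjs
    have := congrFun hx ⟨j, hjM⟩
    simp only [f, LinearMap.pi_apply, LinearMap.comp_apply, Finsupp.lapply_apply,
      Submodule.coe_subtype, Pi.zero_apply] at this
    exact hxj this
  exact FiniteDimensional.of_injective f ((LinearMap.ker_eq_bot (M := W) (M₂ := Fin M → 𝔽) (τ₁₂ := RingHom.id 𝔽) (f := f)).1 hker)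

end S15
namespace S15

open Finsupp Submodule

variable {𝔽 : Type} [Field 𝔽]

noncomputable def buildG (step : ℕ → ℕ → EVec 𝔽) : ℕ → EVec 𝔽 :=
  fun n => Nat.rec (step 0 0) (fun p ih => step (p+1) (supSupp ih + 1)) n

lemma buildG_succ (step : ℕ → ℕ → EVec 𝔽) (p : ℕ) :
    buildG step (p+1) = step (p+1) (supSupp (buildG step p) + 1) := rfl

lemma buildG_exists (step : ℕ → ℕ → EVec 𝔽) (p : ℕ) : ∃ M, buildG step p = step p M := by
  cases p with
  | zero => exact ⟨0, rfl⟩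
  | succ p => exact ⟨_, rfl⟩

lemma buildG_isBlockSeq {step : ℕ → ℕ → EVec 𝔽}
    (h0 : ∀ p M, step p M ≠ 0) (hhigh : ∀ p M, ∀ j ∈ (step p M).support, M ≤ j) :
    IsBlockSeq (buildG step) := by
  have hne : ∀ p, buildG step p ≠ 0 := by
    intro p; obtain ⟨M, hM⟩ := buildG_exists step p; rw [hM]; exact h0 p M
  have hstep : ∀ p, ∀ j ∈ (buildG step (p+1)).support, supSupp (buildG step p) < j := by
    intro p j hj
    rw [buildG_succ] at hj
    have := hhigh (p+1) _ j hj
    omega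
  have key : ∀ n m, m < n → ∀ j ∈ (buildG step n).support, supSupp (buildG step m) < j := by
    intro n
    induction n with
    | zero => intro m hm; exact absurd hm (Nat.not_lt_zero m)
    | succ n ih =>
      intro m hm j hj
      rcases Nat.lt_succ_iff_lt_or_eq.1 hm with hm' | rfl
      · have h1 := hstep n j hj
        obtain ⟨j0, hj0⟩ := supp_nonempty (hne n)
        have h2 := ih m hm' j0 hj0
        have h3 := le_supSupp hj0
        omega
      · exact hstep m j hj
  refine ⟨hne, fun m n hmn i hi j hj => ?_⟩
  have h1 := key n m hmn j hj
  have h2 := le_supSupp hi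
  omega

lemma exists_blockSeq_of_high {P : EVec 𝔽 → Prop}
    (h : ∀ M : ℕ, ∃ x, P x ∧ x ≠ 0 ∧ ∀ j ∈ x.support, M ≤ j) :
    ∃ C, IsBlockSeq C ∧ ∀ n, P (C n) := by
  choose g hg1 hg2 hg3 using h
  refine ⟨buildG (fun _ M => g M), buildG_isBlockSeq (fun _ M => hg2 M) (fun _ M => hg3 M), ?_⟩
  intro n
  obtain ⟨M, hM⟩ := buildG_exists (fun _ M => g M) n
  rw [hM]; exact hg1 M

lemma exists_strictMono_in {T : Set ℕ} (hT : T.Infinite) (n0 : ℕ) :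
    ∃ σ : ℕ → ℕ, StrictMono σ ∧ ∀ m, σ m ∈ T ∧ n0 ≤ σ m := by
  have h : ∀ M : ℕ, ∃ k, k ∈ T ∧ M < k := by
    intro M; obtain ⟨k, hk1, hk2⟩ := hT.exists_gt M; exact ⟨k, hk1, hk2⟩
  choose g hg1 hg2 using h
  refine ⟨fun m => Nat.rec (g n0) (fun _ ih => g ih) m, ?_, ?_⟩
  · exact strictMono_nat_of_lt_succ fun n => hg2 _
  · intro m
    induction m with
    | zero => exact ⟨hg1 n0, le_of_lt (hg2 n0)⟩
    | succ m ih => exact ⟨hg1 _, le_trans ih.2 (le_of_lt (hg2 _))⟩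

noncomputable def bSeq (G : ℕ → EVec 𝔽) (t : ℕ → ℕ) : ℕ → ℕ
  | 0 => 0
  | (k+1) => supSupp (G (t (k+1) - 1)) + 1

lemma bSeq_zero (G : ℕ → EVec 𝔽) (t : ℕ → ℕ) : bSeq G t 0 = 0 := rfl

lemma bSeq_succ (G : ℕ → EVec 𝔽) (t : ℕ → ℕ) (k : ℕ) :
    bSeq G t (k+1) = supSupp (G (t (k+1) - 1)) + 1 := rfl

lemma tsub_lt {t : ℕ → ℕ} (ht0 : t 0 = 0) (ht : StrictMono t) {a b : ℕ}
    (h : a < b) (ha : 0 < a) : t a - 1 < t b - 1 := by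
  have h1 := ht h
  have h2 := ht ha
  rw [ht0] at h2
  omega

lemma bSeq_strictMono {G : ℕ → EVec 𝔽} (hG : IsBlockSeq G) {t : ℕ → ℕ}
    (ht0 : t 0 = 0) (ht : StrictMono t) : StrictMono (bSeq G t) := by
  apply strictMono_nat_of_lt_succ
  intro k
  cases k with
  | zero => rw [bSeq_zero, bSeq_succ]; omega
  | succ k =>
    rw [bSeq_succ, bSeq_succ]
    have h2 := supSupp_strict hG (tsub_lt ht0 ht (show k+1 < k+1+1 by omega) (by omega))
    omega

lemma bSeq_supp_subset {G : ℕ → EVec 𝔽} (hG : IsBlockSeq G) {t : ℕ → ℕ}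
    (ht0 : t 0 = 0) (ht : StrictMono t) {k p : ℕ} (h1 : t k ≤ p) (h2 : p < t (k+1)) :
    ∀ j ∈ (G p).support, bSeq G t k ≤ j ∧ j < bSeq G t (k+1) := by
  intro j hj
  constructor
  · cases k with
    | zero => exact Nat.zero_le j
    | succ k =>
      have h1' : t (k+1) ≤ p := h1
      have hpos : 1 ≤ t (k+1) := by
        have h3 : t 0 < t (k+1) := ht (by omega)
        rw [ht0] at h3
        omega
      have hlt : t (k+1) - 1 < p := by omega
      have h3 := supSupp_lt hG hlt j hj
      rw [bSeq_succ]
      omega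
  · have hle : p ≤ t (k+1) - 1 := by omega
    have h4 : supSupp (G p) ≤ supSupp (G (t (k+1) - 1)) := supSupp_mono hG hle
    have h3 := le_supSupp hj
    rw [bSeq_succ]
    omega

lemma memIplus_iff {𝒜 : Set (ℕ → EVec 𝔽)} {Y : Set (EVec 𝔽)} :
    MemIplus 𝒜 Y ↔ ∀ F : Finset (ℕ → EVec 𝔽), ↑F ⊆ 𝒜 →
      BigSet (Y \ ⋃ A ∈ F, (spanSeq A : Set (EVec 𝔽))) := by
  constructor
  · intro h F hF
    by_contra hb
    exact h ⟨F, hF, hb⟩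
  · rintro h ⟨F, hF, hs⟩
    exact hs (h F hF)

lemma big_diff {Y : Set (EVec 𝔽)} {Eseq : ℕ → EVec 𝔽} (hE : IsBlockSeq Eseq)
    (hY : ∀ x ∈ spanSeq Eseq, x ≠ 0 → x ∈ Y)
    {F : Finset (ℕ → EVec 𝔽)}
    (hFfin : ∀ A ∈ F, FiniteDimensional 𝔽 ↥(spanSeq Eseq ⊓ spanSeq A)) :
    BigSet (Y \ ⋃ A ∈ F, (spanSeq A : Set (EVec 𝔽))) := by
  obtain ⟨k, hk⟩ := tail_avoid hE F hFfin
  refine ⟨tailSeq Eseq k, isBlockSeq_tail hE k, ?_⟩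
  intro x hx hx0
  refine ⟨hY x (spanSeq_tail_le _ _ hx) hx0, ?_⟩
  simp only [Set.mem_iUnion, SetLike.mem_coe, not_exists]
  intro A hA
  exact hk x hx hx0 A hA

lemma findim_inter {𝒜 : Set (ℕ → EVec 𝔽)} (hAD : ADFamily 𝒜) {An A' : ℕ → EVec 𝔽}
    (h1 : An ∈ 𝒜) (h2 : A' ∈ 𝒜) (hne : An ≠ A') {V : Submodule 𝔽 (EVec 𝔽)}
    (hV : V ≤ spanSeq An) : FiniteDimensional 𝔽 ↥(V ⊓ spanSeq A') := by
  haveI : FiniteDimensional 𝔽 ↥(spanSeq An ⊓ spanSeq A') := hAD.2 An h1 A' h2 hne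
  exact Submodule.finiteDimensional_of_le (inf_le_inf_right _ hV)

lemma spanSub_compl {Sset : Set ℕ} {W : Submodule 𝔽 (EVec 𝔽)} {G : ℕ → EVec 𝔽}
    (hG : IsBlockSeq G)
    (hmem : ∀ p, G p ∈ (W : Set (EVec 𝔽)) ∩ (↑(ZSub 𝔽 Sset))ᶜ) :
    SpanSub G ((W : Set (EVec 𝔽)) ∩ (↑(ZSub 𝔽 Sset))ᶜ) := by
  intro x hx hx0
  constructor
  · exact spanSeq_le_of_mem (fun p => (hmem p).1) hx
  · rw [Set.mem_compl_iff]
    intro hxZ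
    rw [SetLike.mem_coe, mem_ZSub] at hxZ
    rw [spanSeq, Finsupp.mem_span_range_iff_exists_finsupp] at hx
    obtain ⟨c, hc⟩ := hx
    have hcne : c ≠ 0 := by
      rintro rfl
      rw [Finsupp.sum_zero_index] at hc
      exact hx0 hc.symm
    obtain ⟨k, hk⟩ := Finsupp.support_nonempty_iff.2 hcne
    have h1 : ¬ ((G k).support : Set ℕ) ⊆ Sset := by
      have h2 := (hmem k).2
      rw [Set.mem_compl_iff, SetLike.mem_coe, mem_ZSub] at h2
      exact h2
    obtain ⟨tt, htt, httS⟩ := Set.not_subset.1 h1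
    have htt' : tt ∈ (G k).support := htt
    have hxt : x tt = c k * (G k tt) := by
      rw [← hc, Finsupp.sum, Finsupp.finset_sum_apply]
      rw [Finset.sum_eq_single k]
      · rw [Finsupp.smul_apply, smul_eq_mul]
      · intro i hi hik
        rw [Finsupp.smul_apply, smul_eq_mul]
        have hGit : G i tt = 0 := by
          rw [← Finsupp.notMem_support_iff]
          intro hmem'
          rcases Nat.lt_or_ge i k with h | h
          · exact lt_irrefl tt (hG.2 i k h tt hmem' tt htt')
          · have hik' : k < i := by omega
            exact lt_irrefl tt (hG.2 k i hik' tt htt' tt hmem')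
        rw [hGit, mul_zero]
      · intro hk'; exact absurd hk hk'
    have hGkt : G k tt ≠ 0 := Finsupp.mem_support_iff.1 htt'
    have hck : c k ≠ 0 := Finsupp.mem_support_iff.1 hk
    have : tt ∈ x.support := Finsupp.mem_support_iff.2 (by rw [hxt]; exact mul_ne_zero hck hGkt)
    exact httS (hxZ this)

end S15
namespace S15

open Finsupp Submodule

variable {𝔽 : Type} [Field 𝔽]

lemma memIplus_mono {𝒜 : Set (ℕ → EVec 𝔽)} {Y Y' : Set (EVec 𝔽)} (hYY : Y ⊆ Y')
    (h : MemIplus 𝒜 Y) : MemIplus 𝒜 Y' := by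
  rw [memIplus_iff] at h ⊢
  intro F hF
  obtain ⟨C, hC, hCsub⟩ := h F hF
  exact ⟨C, hC, fun x hx hx0 => ⟨hYY (hCsub x hx hx0).1, (hCsub x hx hx0).2⟩⟩

/-- The recursive construction of an a.d. sequence `(Aₙ, Dₙ)` with `⟨Dₙ⟩ ≤ ⟨Aₙ⟩`,
nonzero vectors of `⟨Dₙ⟩` in `Y`, and the `Aₙ` pairwise distinct. -/
lemma exists_AD_seq {𝒜 : Set (ℕ → EVec 𝔽)} {Y : Set (EVec 𝔽)}
    (hY : MemIplus 𝒜 Y)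
    (hcase : ∀ C : ℕ → EVec 𝔽, IsBlockSeq C → SpanSub C Y →
      ∃ A ∈ 𝒜, ¬ FiniteDimensional 𝔽 ↥(spanSeq C ⊓ spanSeq A)) :
    ∃ (A : ℕ → (ℕ → EVec 𝔽)) (D : ℕ → (ℕ → EVec 𝔽)),
      (∀ n, A n ∈ 𝒜) ∧ Function.Injective A ∧
      (∀ n, IsBlockSeq (D n)) ∧ (∀ n, spanSeq (D n) ≤ spanSeq (A n)) ∧
      (∀ n, ∀ v ∈ spanSeq (D n), v ≠ 0 → v ∈ Y) := by
  classical
  rw [memIplus_iff] at hY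
  set P : ((ℕ → EVec 𝔽) × (ℕ → EVec 𝔽)) → Prop := fun x =>
    x.1 ∈ 𝒜 ∧ IsBlockSeq x.2 ∧ spanSeq x.2 ≤ spanSeq x.1 ∧
      ∀ v ∈ spanSeq x.2, v ≠ 0 → v ∈ Y with hP
  set r : ((ℕ → EVec 𝔽) × (ℕ → EVec 𝔽)) → ((ℕ → EVec 𝔽) × (ℕ → EVec 𝔽)) → Prop :=
    fun x y => ∀ v ∈ spanSeq y.2, v ≠ 0 → v ∉ spanSeq x.1 with hr
  have hstep : ∀ s : Finset ((ℕ → EVec 𝔽) × (ℕ → EVec 𝔽)),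
      (∀ x ∈ s, P x) → ∃ y, P y ∧ ∀ x ∈ s, r x y := by
    intro s hs
    set F : Finset (ℕ → EVec 𝔽) := s.image Prod.fst with hF
    have hF𝒜 : ↑F ⊆ 𝒜 := by
      intro A hA
      rw [hF] at hA
      simp only [Finset.coe_image, Set.mem_image, Finset.mem_coe] at hA
      obtain ⟨x, hx, rfl⟩ := hA
      exact (hs x hx).1
    obtain ⟨C, hC, hCsub⟩ := hY F hF𝒜
    have hCY : SpanSub C Y := fun x hx hx0 => (hCsub x hx hx0).1
    obtain ⟨A, hA, hAfd⟩ := hcase C hC hCY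
    obtain ⟨D, hD, hDmem⟩ := exists_blockSeq_of_high
      (P := fun x => x ∈ spanSeq C ⊓ spanSeq A)
      (fun M => by
        obtain ⟨x, hx, hx0, hhigh⟩ := exists_high_of_infdim hAfd M
        exact ⟨x, hx, hx0, hhigh⟩)
    have hDC : spanSeq D ≤ spanSeq C ⊓ spanSeq A := spanSeq_le_of_mem hDmem
    refine ⟨(A, D), ⟨hA, hD, fun x hx => (hDC hx).2, ?_⟩, ?_⟩
    · intro v hv hv0
      exact (hCsub v (hDC hv).1 hv0).1
    · intro x hx v hv hv0
      have hvC := hCsub v (hDC hv).1 hv0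
      intro hvx
      apply hvC.2
      simp only [Set.mem_iUnion, SetLike.mem_coe]
      exact ⟨x.1, Finset.mem_image_of_mem Prod.fst hx, hvx⟩
  obtain ⟨g, hgP, hgr⟩ := exists_seq_of_forall_finset_exists P r hstep
  refine ⟨fun n => (g n).1, fun n => (g n).2, fun n => (hgP n).1, ?_, fun n => (hgP n).2.1,
    fun n => (hgP n).2.2.1, fun n => (hgP n).2.2.2⟩
  have hne : ∀ m n, m < n → (g m).1 ≠ (g n).1 := by
    intro m n hmn he
    have hv : (g n).2 0 ∈ spanSeq (g n).2 := Submodule.subset_span ⟨0, rfl⟩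
    have hv0 : (g n).2 0 ≠ 0 := (hgP n).2.1.1 0
    have h1 := hgr m n hmn _ hv hv0
    have h2 : (g n).2 0 ∈ spanSeq (g n).1 := (hgP n).2.2.1 hv
    rw [he] at h1
    exact h1 h2
  intro m n he
  by_contra hmn
  rcases Nat.lt_or_ge m n with h | h
  · exact hne m n h he
  · exact hne n m (by omega) he.symm

/-- From a family of block sequences `Dₙ`, build a single block sequence `G` whose `p`-th
vector comes from `D (p - sqrt p * sqrt p)`. -/
lemma exists_G (D : ℕ → (ℕ → EVec 𝔽)) (hD : ∀ n, IsBlockSeq (D n)) :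
    ∃ G : ℕ → EVec 𝔽, IsBlockSeq G ∧
      ∀ p, ∃ m, G p = D (p - Nat.sqrt p * Nat.sqrt p) m := by
  set step : ℕ → ℕ → EVec 𝔽 := fun p M => D (p - Nat.sqrt p * Nat.sqrt p) (M + 2) with hstep
  have h0 : ∀ p M, step p M ≠ 0 := fun p M => (hD _).1 _
  have hhigh : ∀ p M, ∀ j ∈ (step p M).support, M ≤ j := by
    intro p M j hj
    have h1 := supSupp_lt (hD (p - Nat.sqrt p * Nat.sqrt p)) (show M+1 < M+2 by omega) j hj
    have h2 := self_le_supSupp (hD (p - Nat.sqrt p * Nat.sqrt p)) (M+1)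
    omega
  refine ⟨buildG step, buildG_isBlockSeq h0 hhigh, ?_⟩
  intro p
  obtain ⟨M, hM⟩ := buildG_exists step p
  exact ⟨M + 2, hM⟩

lemma subseq_from_G {D : ℕ → (ℕ → EVec 𝔽)} {G : ℕ → EVec 𝔽}
    (hGD : ∀ p, ∃ m, G p = D (p - Nat.sqrt p * Nat.sqrt p) m)
    {n q : ℕ} (hq : n ≤ q) : ∃ m', G (q * q + n) = D n m' := by
  obtain ⟨m', hm'⟩ := hGD (q * q + n)
  have hs : Nat.sqrt (q * q + n) = q := Nat.sqrt_add_eq _ (by omega)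
  rw [hs] at hm'
  have he : q * q + n - q * q = n := by omega
  rw [he] at hm'
  exact ⟨m', hm'⟩

/-- The main construction for parts (ii) and (iii). -/
lemma main2 {𝒜 : Set (ℕ → EVec 𝔽)} (hAD : ADFamily 𝒜) {Y : Set (EVec 𝔽)}
    (hY : MemIplus 𝒜 Y)
    (hcl : ∀ G : ℕ → EVec 𝔽, IsBlockSeq G → (∀ p, G p ∈ Y) → SpanSub G Y) :
    ∃ C ∈ HMinus 𝒜, SpanSub C Y := by
  classical
  by_cases hcase : ∃ C, IsBlockSeq C ∧ SpanSub C Y ∧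
      ∀ A ∈ 𝒜, FiniteDimensional 𝔽 ↥(spanSeq C ⊓ spanSeq A)
  · obtain ⟨C, hC, hCY, hCfd⟩ := hcase
    refine ⟨C, ⟨hC, ?_⟩, hCY⟩
    rintro ⟨F, hF, hs⟩
    exact hs (big_diff hC (fun x hx _ => hx) (fun A hA => hCfd A (hF hA)))
  · push_neg at hcase
    have hcase' : ∀ C : ℕ → EVec 𝔽, IsBlockSeq C → SpanSub C Y →
        ∃ A ∈ 𝒜, ¬ FiniteDimensional 𝔽 ↥(spanSeq C ⊓ spanSeq A) := by
      intro C hC hCY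
      obtain ⟨A, hA, hfd⟩ := hcase C hC hCY
      exact ⟨A, hA, hfd⟩
    obtain ⟨A, D, hA𝒜, hAinj, hD, hDA, hDY⟩ := exists_AD_seq hY hcase'
    obtain ⟨G, hG, hGD⟩ := exists_G D hD
    have hGmem : ∀ p, G p ∈ Y := by
      intro p
      obtain ⟨m, hm⟩ := hGD p
      rw [hm]
      exact hDY _ _ (Submodule.subset_span ⟨m, rfl⟩) ((hD _).1 m)
    refine ⟨G, ⟨hG, ?_⟩, hcl G hG hGmem⟩
    rintro ⟨F, hF, hs⟩
    apply hs
    -- find n with A n ∉ F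
    have hfin : {n : ℕ | A n ∈ (↑F : Set (ℕ → EVec 𝔽))}.Finite := by
      apply Set.Finite.preimage (Set.injOn_of_injective hAinj) F.finite_toSet
    obtain ⟨n, hn⟩ := (Set.Finite.infinite_compl hfin).nonempty
    have hnF : A n ∉ F := hn
    -- the subsequence of G consisting of vectors from D n
    set pos : ℕ → ℕ := fun m => (m + n) * (m + n) + n with hpos
    have hposmono : StrictMono pos := by
      intro a b hab
      have := Nat.mul_self_lt_mul_self (show a + n < b + n by omega)
      simp only [hpos]
      omega
    set Eseq : ℕ → EVec 𝔽 := fun m => G (pos m) with hE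
    have hED : ∀ m, ∃ m', Eseq m = D n m' := fun m => subseq_from_G hGD (by omega)
    have hEblock : IsBlockSeq Eseq := isBlockSeq_comp hG hposmono
    have hEG : spanSeq Eseq ≤ spanSeq G := spanSeq_comp_le G pos
    have hEDn : spanSeq Eseq ≤ spanSeq (D n) := by
      apply spanSeq_le_of_mem
      intro m
      obtain ⟨m', hm'⟩ := hED m
      rw [hm']
      exact Submodule.subset_span ⟨m', rfl⟩
    have hEAn : spanSeq Eseq ≤ spanSeq (A n) := le_trans hEDn (hDA n)
    exact big_diff hEblock (fun x hx _ => hEG hx)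
      (fun A' hA' => findim_inter hAD (hA𝒜 n) (hF hA')
        (fun he => hnF (he ▸ hA')) hEAn)

end S15
namespace S15

open Finsupp Submodule

variable {𝔽 : Type} [Field 𝔽]

lemma part_i {𝒜 : Set (ℕ → EVec 𝔽)} (hAD : ADFamily 𝒜) {B : ℕ → EVec 𝔽}
    (hB : B ∈ HMinus 𝒜) (Sset : Set ℕ) :
    MemIplus 𝒜 ((spanSeq B : Set (EVec 𝔽)) ∩ (ZSub 𝔽 Sset : Set (EVec 𝔽))) ∨
      MemIplus 𝒜 ((spanSeq B : Set (EVec 𝔽)) ∩ (ZSub 𝔽 Sset : Set (EVec 𝔽))ᶜ) := by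
  classical
  by_contra hc
  push_neg at hc
  obtain ⟨h1, h2⟩ := hc
  have h1' : MemI 𝒜 ((spanSeq B : Set (EVec 𝔽)) ∩ (ZSub 𝔽 Sset : Set (EVec 𝔽))) :=
    not_not.1 h1
  have h2' : MemI 𝒜 ((spanSeq B : Set (EVec 𝔽)) ∩ (ZSub 𝔽 Sset : Set (EVec 𝔽))ᶜ) :=
    not_not.1 h2
  obtain ⟨F₁, hF₁, hs₁⟩ := h1'
  obtain ⟨F₂, hF₂, hs₂⟩ := h2'
  have hbig := (memIplus_iff.1 hB.2) (F₁ ∪ F₂) (by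
    rw [Finset.coe_union]; exact Set.union_subset hF₁ hF₂)
  obtain ⟨C, hC, hCsub⟩ := hbig
  have hnotinU : ∀ x ∈ spanSeq C, x ≠ 0 → ∀ F : Finset (ℕ → EVec 𝔽), F ⊆ F₁ ∪ F₂ →
      x ∉ ⋃ A ∈ F, (spanSeq A : Set (EVec 𝔽)) := by
    intro x hx hx0 F hFsub hxF
    apply (hCsub x hx hx0).2
    simp only [Set.mem_iUnion, SetLike.mem_coe] at hxF ⊢
    obtain ⟨A, hA, hxA⟩ := hxF
    exact ⟨A, hFsub hA, hxA⟩
  by_cases hfd : FiniteDimensional 𝔽 ↥(spanSeq C ⊓ ZSub 𝔽 Sset)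
  · apply hs₂
    obtain ⟨N, hN⟩ := findim_supp_bound _ hfd
    refine ⟨tailSeq C N, isBlockSeq_tail hC N, ?_⟩
    intro x hx hx0
    have hxC : x ∈ spanSeq C := spanSeq_tail_le C N hx
    refine ⟨⟨(hCsub x hxC hx0).1, ?_⟩, hnotinU x hxC hx0 F₂ Finset.subset_union_right⟩
    rw [Set.mem_compl_iff]
    intro hxZ
    rw [SetLike.mem_coe] at hxZ
    obtain ⟨j, hj⟩ := supp_nonempty hx0
    have h4 := hN x ⟨hxC, hxZ⟩ j hj
    have h5 := tail_supp_ge hC N x hx j hj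
    omega
  · apply hs₁
    obtain ⟨Dd, hDd, hDdmem⟩ := exists_blockSeq_of_high
      (P := fun x => x ∈ spanSeq C ⊓ ZSub 𝔽 Sset) (fun M => exists_high_of_infdim hfd M)
    have hDdle : spanSeq Dd ≤ spanSeq C ⊓ ZSub 𝔽 Sset := spanSeq_le_of_mem hDdmem
    refine ⟨Dd, hDd, ?_⟩
    intro x hx hx0
    have hxC : x ∈ spanSeq C := (hDdle hx).1
    exact ⟨⟨(hCsub x hxC hx0).1, (hDdle hx).2⟩, hnotinU x hxC hx0 F₁ Finset.subset_union_left⟩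

lemma part_ii {𝒜 : Set (ℕ → EVec 𝔽)} (hAD : ADFamily 𝒜) (B : ℕ → EVec 𝔽) (Sset : Set ℕ)
    (h : MemIplus 𝒜 ((spanSeq B : Set (EVec 𝔽)) ∩ (ZSub 𝔽 Sset : Set (EVec 𝔽)))) :
    ∃ C ∈ HMinus 𝒜,
      SpanSub C ((spanSeq B : Set (EVec 𝔽)) ∩ (ZSub 𝔽 Sset : Set (EVec 𝔽))) := by
  apply main2 hAD h
  intro G hG hmem x hx hx0
  have h1 : spanSeq G ≤ spanSeq B ⊓ ZSub 𝔽 Sset :=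
    spanSeq_le_of_mem fun p => ⟨(hmem p).1, (hmem p).2⟩
  exact ⟨(h1 hx).1, (h1 hx).2⟩

lemma part_iii {𝒜 : Set (ℕ → EVec 𝔽)} (hAD : ADFamily 𝒜) (B : ℕ → EVec 𝔽) (Sset : Set ℕ)
    (h : MemIplus 𝒜 ((spanSeq B : Set (EVec 𝔽)) ∩ (ZSub 𝔽 Sset : Set (EVec 𝔽))ᶜ)) :
    ∃ C ∈ HMinus 𝒜,
      SpanSub C ((spanSeq B : Set (EVec 𝔽)) ∩ (ZSub 𝔽 Sset : Set (EVec 𝔽))ᶜ) := by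
  apply main2 hAD h
  intro G hG hmem
  exact spanSub_compl hG hmem

lemma part_iv {ι : Type} {S : ι → Set ℕ}
    (hsplit : ∀ b : ℕ → ℕ, b 0 = 0 → StrictMono b → ∃ i, SplitsPartition (S i) b)
    {𝒜 : Set (ℕ → EVec 𝔽)} (hAD : ADFamily 𝒜) {B : ℕ → EVec 𝔽} (hB : B ∈ HMinus 𝒜) :
    ∃ i, MemIplus 𝒜 ((spanSeq B : Set (EVec 𝔽)) ∩ (ZSub 𝔽 (S i) : Set (EVec 𝔽))) ∧
      MemIplus 𝒜 ((spanSeq B : Set (EVec 𝔽)) ∩ (ZSub 𝔽 (S i) : Set (EVec 𝔽))ᶜ) := by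
  classical
  by_cases hcase : ∃ C, IsBlockSeq C ∧ SpanSub C (spanSeq B : Set (EVec 𝔽)) ∧
      ∀ A ∈ 𝒜, FiniteDimensional 𝔽 ↥(spanSeq C ⊓ spanSeq A)
  · obtain ⟨C, hC, hCB, hfd⟩ := hcase
    obtain ⟨i, hT0, hT1⟩ := hsplit (bSeq C id) (bSeq_zero C id)
      (bSeq_strictMono hC rfl strictMono_id)
    have hintC : ∀ m : ℕ, ∀ j ∈ (C m).support, bSeq C id m ≤ j ∧ j < bSeq C id (m + 1) :=
      fun m => bSeq_supp_subset hC (t := id) rfl strictMono_id (le_refl m) (Nat.lt_succ_self m)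
    refine ⟨i, ?_, ?_⟩
    · rw [memIplus_iff]
      intro F hF
      obtain ⟨σ, hσ, hσT⟩ := exists_strictMono_in hT0 0
      have hEblock : IsBlockSeq (fun m => C (σ m)) := isBlockSeq_comp hC hσ
      apply big_diff hEblock ?_ ?_
      · intro x hx hx0
        refine ⟨hCB x (spanSeq_comp_le C σ hx) hx0, ?_⟩
        have hmem : ∀ m, C (σ m) ∈ ZSub 𝔽 (S i) := by
          intro m
          rw [mem_ZSub]
          intro j hj
          have hint := hintC (σ m) j hj
          exact (hσT m).1 j hint.1 hint.2
        exact spanSeq_le_of_mem hmem hx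
      · intro A' hA'
        haveI := hfd A' (hF hA')
        exact Submodule.finiteDimensional_of_le (inf_le_inf_right _ (spanSeq_comp_le C σ))
    · rw [memIplus_iff]
      intro F hF
      obtain ⟨σ, hσ, hσT⟩ := exists_strictMono_in hT1 0
      have hEblock : IsBlockSeq (fun m => C (σ m)) := isBlockSeq_comp hC hσ
      apply big_diff hEblock ?_ ?_
      · intro x hx hx0
        refine ⟨hCB x (spanSeq_comp_le C σ hx) hx0, ?_⟩
        rw [Set.mem_compl_iff]
        intro hxZ
        have hsupp : (x.support : Set ℕ) ⊆ (S i)ᶜ := by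
          apply span_supp_subset (T := Set.range fun m => C (σ m)) ?_ x hx
          rintro y ⟨m, rfl⟩ j hj
          have hint := hintC (σ m) j hj
          exact (hσT m).1 j hint.1 hint.2
        obtain ⟨j, hj⟩ := supp_nonempty hx0
        rw [SetLike.mem_coe, mem_ZSub] at hxZ
        exact hsupp hj (hxZ hj)
      · intro A' hA'
        haveI := hfd A' (hF hA')
        exact Submodule.finiteDimensional_of_le (inf_le_inf_right _ (spanSeq_comp_le C σ))
  · push_neg at hcase
    have hcase' : ∀ C : ℕ → EVec 𝔽, IsBlockSeq C → SpanSub C (spanSeq B : Set (EVec 𝔽)) →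
        ∃ A ∈ 𝒜, ¬ FiniteDimensional 𝔽 ↥(spanSeq C ⊓ spanSeq A) := by
      intro C hC hCY
      obtain ⟨A, hA, hfd⟩ := hcase C hC hCY
      exact ⟨A, hA, hfd⟩
    obtain ⟨A, D, hA𝒜, hAinj, hD, hDA, hDY⟩ := exists_AD_seq hB.2 hcase'
    obtain ⟨G, hG, hGD⟩ := exists_G D hD
    set t : ℕ → ℕ := fun k => k * k with ht
    have ht0 : t 0 = 0 := rfl
    have htmono : StrictMono t := fun a b hab => Nat.mul_self_lt_mul_self hab
    obtain ⟨i, hT0, hT1⟩ := hsplit (bSeq G t) (bSeq_zero G t) (bSeq_strictMono hG ht0 htmono)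
    have hfinn : ∀ F : Finset (ℕ → EVec 𝔽), ∃ n, A n ∉ F := by
      intro F
      have hfin : {n : ℕ | A n ∈ (↑F : Set (ℕ → EVec 𝔽))}.Finite :=
        Set.Finite.preimage (Set.injOn_of_injective hAinj) F.finite_toSet
      obtain ⟨n, hn⟩ := (Set.Finite.infinite_compl hfin).nonempty
      exact ⟨n, hn⟩
    refine ⟨i, ?_, ?_⟩
    · rw [memIplus_iff]
      intro F hF
      obtain ⟨n, hnF⟩ := hfinn F
      obtain ⟨σ, hσ, hσT⟩ := exists_strictMono_in hT0 n
      set pos : ℕ → ℕ := fun m => σ m * σ m + n with hposdef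
      have hposmono : StrictMono pos := by
        intro a b hab
        have h6 := Nat.mul_self_lt_mul_self (hσ hab)
        simp only [hposdef]
        omega
      set Eseq : ℕ → EVec 𝔽 := fun m => G (pos m) with hEdef
      have hEblock : IsBlockSeq Eseq := isBlockSeq_comp hG hposmono
      have hED : ∀ m, ∃ m', Eseq m = D n m' := fun m => subseq_from_G hGD (hσT m).2
      have hEDn : spanSeq Eseq ≤ spanSeq (D n) := by
        apply spanSeq_le_of_mem
        intro m
        obtain ⟨m', hm'⟩ := hED m
        rw [hm']
        exact Submodule.subset_span ⟨m', rfl⟩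
      have hint : ∀ m, ∀ j ∈ (G (pos m)).support,
          bSeq G t (σ m) ≤ j ∧ j < bSeq G t (σ m + 1) := by
        intro m
        apply bSeq_supp_subset hG ht0 htmono
        · show t (σ m) ≤ pos m
          simp only [ht, hposdef]
          omega
        · show pos m < t (σ m + 1)
          have hn2 : n ≤ σ m := (hσT m).2
          have hexp : (σ m + 1) * (σ m + 1) = σ m * σ m + 2 * σ m + 1 := by ring
          simp only [ht, hposdef]
          omega
      apply big_diff hEblock ?_ ?_
      · intro x hx hx0
        constructor
        · exact hDY n x (hEDn hx) hx0
        · have hmem : ∀ m, Eseq m ∈ ZSub 𝔽 (S i) := by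
            intro m
            rw [mem_ZSub]
            intro j hj
            have h5 := hint m j hj
            exact (hσT m).1 j h5.1 h5.2
          exact spanSeq_le_of_mem hmem hx
      · intro A' hA'
        exact findim_inter hAD (hA𝒜 n) (hF hA') (fun he => hnF (he ▸ hA'))
          (le_trans hEDn (hDA n))
    · rw [memIplus_iff]
      intro F hF
      obtain ⟨n, hnF⟩ := hfinn F
      obtain ⟨σ, hσ, hσT⟩ := exists_strictMono_in hT1 n
      set pos : ℕ → ℕ := fun m => σ m * σ m + n with hposdef
      have hposmono : StrictMono pos := by
        intro a b hab
        have h6 := Nat.mul_self_lt_mul_self (hσ hab)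
        simp only [hposdef]
        omega
      set Eseq : ℕ → EVec 𝔽 := fun m => G (pos m) with hEdef
      have hEblock : IsBlockSeq Eseq := isBlockSeq_comp hG hposmono
      have hED : ∀ m, ∃ m', Eseq m = D n m' := fun m => subseq_from_G hGD (hσT m).2
      have hEDn : spanSeq Eseq ≤ spanSeq (D n) := by
        apply spanSeq_le_of_mem
        intro m
        obtain ⟨m', hm'⟩ := hED m
        rw [hm']
        exact Submodule.subset_span ⟨m', rfl⟩
      have hint : ∀ m, ∀ j ∈ (G (pos m)).support,
          bSeq G t (σ m) ≤ j ∧ j < bSeq G t (σ m + 1) := by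
        intro m
        apply bSeq_supp_subset hG ht0 htmono
        · show t (σ m) ≤ pos m
          simp only [ht, hposdef]
          omega
        · show pos m < t (σ m + 1)
          have hn2 : n ≤ σ m := (hσT m).2
          have hexp : (σ m + 1) * (σ m + 1) = σ m * σ m + 2 * σ m + 1 := by ring
          simp only [ht, hposdef]
          omega
      apply big_diff hEblock ?_ ?_
      · intro x hx hx0
        constructor
        · exact hDY n x (hEDn hx) hx0
        · rw [Set.mem_compl_iff]
          intro hxZ
          have hsupp : (x.support : Set ℕ) ⊆ (S i)ᶜ := by
            apply span_supp_subset (T := Set.range Eseq) ?_ x hx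
            rintro y ⟨m, rfl⟩ j hj
            have h5 := hint m j hj
            exact (hσT m).1 j h5.1 h5.2
          obtain ⟨j, hj⟩ := supp_nonempty hx0
          rw [SetLike.mem_coe, mem_ZSub] at hxZ
          exact hsupp hj (hxZ hj)
      · intro A' hA'
        exact findim_inter hAD (hA𝒜 n) (hF hA') (fun he => hnF (he ▸ hA'))
          (le_trans hEDn (hDA n))

end S15
/-- the splitting lemma for a block-splitting family `{S i}` and the
subspaces `Z i = span{e_n : n ∈ S i}`. -/
theorem statement15 [Countable 𝔽] {ι : Type} (S : ι → Set ℕ)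
    (hSinf : ∀ i, (S i).Infinite)
    (hsplit : ∀ b : ℕ → ℕ, b 0 = 0 → StrictMono b → ∃ i, SplitsPartition (S i) b)
    (𝒜 : Set (ℕ → EVec 𝔽)) (hAD : ADFamily 𝒜)
    (B : ℕ → EVec 𝔽) (hB : B ∈ HMinus 𝒜) :
    (∀ i, MemIplus 𝒜 ((spanSeq B : Set (EVec 𝔽)) ∩ (ZSub 𝔽 (S i) : Set (EVec 𝔽))) ∨
      MemIplus 𝒜 ((spanSeq B : Set (EVec 𝔽)) ∩ (ZSub 𝔽 (S i) : Set (EVec 𝔽))ᶜ)) ∧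
    (∀ i, MemIplus 𝒜 ((spanSeq B : Set (EVec 𝔽)) ∩ (ZSub 𝔽 (S i) : Set (EVec 𝔽))) →
      ∃ C ∈ HMinus 𝒜,
        SpanSub C ((spanSeq B : Set (EVec 𝔽)) ∩ (ZSub 𝔽 (S i) : Set (EVec 𝔽)))) ∧
    (∀ i, MemIplus 𝒜 ((spanSeq B : Set (EVec 𝔽)) ∩ (ZSub 𝔽 (S i) : Set (EVec 𝔽))ᶜ) →
      ∃ C ∈ HMinus 𝒜,
        SpanSub C ((spanSeq B : Set (EVec 𝔽)) ∩ (ZSub 𝔽 (S i) : Set (EVec 𝔽))ᶜ)) ∧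
    (∃ i, MemIplus 𝒜 ((spanSeq B : Set (EVec 𝔽)) ∩ (ZSub 𝔽 (S i) : Set (EVec 𝔽))) ∧
      MemIplus 𝒜 ((spanSeq B : Set (EVec 𝔽)) ∩ (ZSub 𝔽 (S i) : Set (EVec 𝔽))ᶜ)) := by
  exact ⟨fun i => S15.part_i hAD hB (S i), fun i h => S15.part_ii hAD B (S i) h,
    fun i h => S15.part_iii hAD B (S i) h, S15.part_iv hsplit hAD hB⟩
end
end

section
/- Let H ⊆ E^[∞] be a selective semicoideal. Then for every countable family {D_n}_{n<ω} of dense open subsets of (H, ≤) and every A ∈ H, there exists B ∈ H with B ≤ A such that B/n ∈ D_{d_A(r_n(B))} for all n < ω (i.e., every selective semicoideal is semiselective). -/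
noncomputable section

variable {𝔽 : Type} [Field 𝔽]

/-- every selective semicoideal diagonalises countable families of dense
open subsets of `(H, ≤)` (i.e. selective semicoideals are semiselective). -/
theorem statement19 [Countable 𝔽] (H : Set (ℕ → EVec 𝔽)) (hH : Semicoideal H)
    (hsel : SelectiveFam H) :
    ∀ D : ℕ → Set (ℕ → EVec 𝔽), (∀ n, DenseOpenIn H (D n)) →
      ∀ A ∈ H, ∃ B ∈ H, SeqLe B A ∧
        ∀ n, tailSeq B n ∈ D (depthIn A (rApprox B n)) := by
  intro D hD A hA
  have h0 : ∃ B ∈ D 0, SeqLe B A := (hD 0).2.2 A hA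
  have hstep : ∀ n (X : ℕ → EVec 𝔽), X ∈ D n → ∃ B ∈ D (n + 1), SeqLe B X :=
    fun n X hX => (hD (n + 1)).2.2 X ((hD n).1 hX)
  -- recursively choose a decreasing sequence with F n ∈ D n
  let F : ∀ n : ℕ, {X : ℕ → EVec 𝔽 // X ∈ D n} := fun n =>
    Nat.rec ⟨h0.choose, h0.choose_spec.1⟩
      (fun k prev => ⟨(hstep k prev.1 prev.2).choose,
        (hstep k prev.1 prev.2).choose_spec.1⟩) n
  let As : ℕ → (ℕ → EVec 𝔽) := fun n => (F n).1
  have hAsD : ∀ n, As n ∈ D n := fun n => (F n).2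
  have hAsH : ∀ n, As n ∈ H := fun n => (hD n).1 (hAsD n)
  have hdec : ∀ n, SeqLe (As (n + 1)) (As n) := fun n =>
    (hstep n (F n).1 (F n).2).choose_spec.2
  have h0le : SeqLe (As 0) A := h0.choose_spec.2
  obtain ⟨B, hBH, hBle, hdiag⟩ := hsel A hA As hAsH hdec h0le
  have hBblock : IsBlockSeq B := hH.1 B hBH
  have htailH : ∀ n, tailSeq B n ∈ H := by
    intro n
    refine hH.2 B hBH (tailSeq B n) ?_ ⟨n, le_refl _⟩
    exact ⟨fun k => hBblock.1 (k + n),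
      fun m k hmk => hBblock.2 (m + n) (k + n) (by omega)⟩
  refine ⟨B, hBH, hBle, fun n => ?_⟩
  exact (hD (depthIn A (rApprox B n))).2.1 _ (hAsD _) _ (htailH n) (hdiag n)
end
end
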